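/- arXiv:1906.08307 — 3 statements merged into one kernel-verified Lean document; each statement's English description precedes it below -/
import Mathlib

section
/- For every real number z > 0, one has z² + z·sin z + 4·cos z − 4 > 0. -/
/-!
Write `f z = z² + z sin z + 4 cos z - 4`. Then `f 0 = f' 0 = 0` and, with `w = z / 2`,
`f'' z = 2 - 2 cos z - z sin z = 4 sin w (sin w - w cos w)`, which is positive on `(0, π)` because
`w < tan w` there; so `f > 0` on `(0, π]`. For `z ≥ π`, `sin z = -sin (z - π) ≥ π - z` and
`cos z ≥ -1` give `f z ≥ π z - 8 ≥ π² - 8 > 0`.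
-/

open Real Set

lemma pos_of_hasDerivAt_of_pos {g g' : ℝ → ℝ} {a : ℝ} (hg : ∀ x, HasDerivAt g (g' x) x)
    (hg0 : g 0 = 0) (hg' : ∀ x ∈ Ioo 0 a, 0 < g' x) : ∀ x ∈ Ioc 0 a, 0 < g x := by
  have hmono : StrictMonoOn g (Icc 0 a) :=
    strictMonoOn_of_deriv_pos (convex_Icc 0 a)
      (fun x _ ↦ (hg x).continuousAt.continuousWithinAt)
      (fun x hx ↦ by rw [(hg x).deriv]; exact hg' x (by simpa using hx))
  intro x ⟨hx0, hxa⟩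
  simpa [hg0] using hmono ⟨le_rfl, hx0.le.trans hxa⟩ ⟨hx0.le, hxa⟩ hx0

lemma mul_cos_lt_sin {x : ℝ} (hx0 : 0 < x) (hx : x < π / 2) : x * cos x < sin x := by
  have hcos : 0 < cos x := cos_pos_of_mem_Ioo ⟨by linarith, hx⟩
  have htan : x < sin x / cos x := tan_eq_sin_div_cos x ▸ lt_tan hx0 hx
  exact (lt_div_iff₀ hcos).1 htan

lemma two_sub_two_mul_cos_sub_mul_sin_pos {z : ℝ} (hz0 : 0 < z) (hz : z < π) :
    0 < 2 - 2 * cos z - z * sin z := by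
  obtain ⟨w, rfl⟩ : ∃ w, z = 2 * w := ⟨z / 2, by ring⟩
  have hsin : 0 < sin w := sin_pos_of_pos_of_lt_pi (by linarith) (by linarith)
  have hw : w * cos w < sin w := mul_cos_lt_sin (by linarith) (by linarith)
  have hhalf : 2 - 2 * cos (2 * w) - 2 * w * sin (2 * w) = 4 * sin w * (sin w - w * cos w) := by
    rw [cos_two_mul, sin_two_mul]
    linear_combination (-4) * sin_sq_add_cos_sq w
  rw [hhalf]
  exact mul_pos (by positivity) (sub_pos.2 hw)

lemma sq_add_mul_sin_add_four_mul_cos_sub_four_pos_of_le_pi {z : ℝ} (hz0 : 0 < z) (hz : z ≤ π) :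
    0 < z ^ 2 + z * sin z + 4 * cos z - 4 := by
  have hf' : ∀ x, HasDerivAt (fun t ↦ 2 * t + t * cos t - 3 * sin t)
      (2 - 2 * cos x - x * sin x) x := fun x ↦ by
    refine ((((hasDerivAt_id' x).const_mul 2).add ((hasDerivAt_id' x).mul (hasDerivAt_cos x))).sub
      ((hasDerivAt_sin x).const_mul 3)).congr_deriv ?_
    ring
  have hf : ∀ x, HasDerivAt (fun t ↦ t ^ 2 + t * sin t + 4 * cos t - 4)
      (2 * x + x * cos x - 3 * sin x) x := fun x ↦ by
    refine ((((hasDerivAt_pow 2 x).add ((hasDerivAt_id' x).mul (hasDerivAt_sin x))).add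
      ((hasDerivAt_cos x).const_mul 4)).sub_const 4).congr_deriv ?_
    ring
  have hf'_pos := pos_of_hasDerivAt_of_pos hf' (by simp)
    fun x hx ↦ two_sub_two_mul_cos_sub_mul_sin_pos hx.1 hx.2
  exact pos_of_hasDerivAt_of_pos hf (by simp) (fun x hx ↦ hf'_pos x (Ioo_subset_Ioc_self hx))
    z ⟨hz0, hz⟩

lemma sq_add_mul_sin_add_four_mul_cos_sub_four_pos_of_pi_le {z : ℝ} (hz : π ≤ z) :
    0 < z ^ 2 + z * sin z + 4 * cos z - 4 := by
  have hsin : π - z ≤ sin z := by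
    have := sin_le (sub_nonneg.2 hz)
    rw [sin_sub_pi] at this
    linarith
  have hz0 : 0 ≤ z := pi_pos.le.trans hz
  nlinarith [mul_le_mul_of_nonneg_left hsin hz0, neg_one_le_cos z, pi_gt_three]

theorem stmt2 (z : ℝ) (hz : 0 < z) :
    z ^ 2 + z * Real.sin z + 4 * Real.cos z - 4 > 0 := by
  rcases le_total z π with h | h
  · exact sq_add_mul_sin_add_four_mul_cos_sub_four_pos_of_le_pi hz h
  · exact sq_add_mul_sin_add_four_mul_cos_sub_four_pos_of_pi_le h
end

section
/- Let θ > 0 and define β(t) = (sin²(tθ) − (tθ)²)/(sin²(θ) − θ²) for t ∈ (0,1]. Then t ↦ β(t)/t⁴ is non-increasing on (0,1]; in particular β(t) ≥ t⁴ for all t ∈ (0,1]. -/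
/-!
With `G x = (x² - sin² x) / x⁴` one has `β t / t⁴ = G (t θ) / G θ` and `G θ > 0`, so it
suffices that `G` is antitone on `(0, ∞)`. Its derivative is
`-2 (x² + x sin x cos x - 2 sin² x) / x⁵`, and at `y = 2x` nonnegativity of the bracket is
`4 - 4 cos y ≤ y² + y sin y`. The difference vanishes to order six at `0`, so this is obtained by
integrating `y cos y ≤ sin y` (i.e. `y ≤ tan y`) three times; the middle step is the
Cusa–Huygens inequality `3 sin y ≤ y (2 + cos y)`.
-/

open Set Real

lemma le_of_hasDerivAt_nonneg {f f' : ℝ → ℝ} {a b : ℝ} (hf : ∀ x, HasDerivAt f (f' x) x)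
    (hf' : ∀ x ∈ Icc a b, 0 ≤ f' x) (hab : a ≤ b) : f a ≤ f b :=
  monotoneOn_of_hasDerivWithinAt_nonneg (convex_Icc a b)
    (fun x _ ↦ (hf x).continuousAt.continuousWithinAt) (fun x _ ↦ (hf x).hasDerivWithinAt)
    (fun x hx ↦ hf' x (interior_subset hx)) (left_mem_Icc.2 hab) (right_mem_Icc.2 hab) hab

namespace Real

lemma mul_cos_le_sin {x : ℝ} (hx₀ : 0 ≤ x) (hxπ : x ≤ π) : x * cos x ≤ sin x := by
  rcases lt_or_ge x (π / 2) with hx | hx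
  · have hcos : 0 < cos x := cos_pos_of_mem_Ioo ⟨by linarith [pi_pos], hx⟩
    have htan := le_tan hx₀ hx
    rwa [tan_eq_sin_div_cos, le_div_iff₀ hcos] at htan
  · calc x * cos x ≤ 0 :=
          mul_nonpos_of_nonneg_of_nonpos hx₀ (cos_nonpos_of_pi_div_two_le_of_le hx (by linarith))
      _ ≤ sin x := sin_nonneg_of_nonneg_of_le_pi hx₀ hxπ

lemma mul_sin_le_two_sub_two_mul_cos {x : ℝ} (hx₀ : 0 ≤ x) (hxπ : x ≤ π) :
    x * sin x ≤ 2 - 2 * cos x := by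
  have hderiv (y : ℝ) :
      HasDerivAt (fun y ↦ 2 - 2 * cos y - y * sin y) (sin y - y * cos y) y := by
    refine ((((hasDerivAt_cos y).const_mul 2).const_sub 2).sub
      ((hasDerivAt_id' y).mul (hasDerivAt_sin y))).congr_deriv ?_
    ring
  have := le_of_hasDerivAt_nonneg hderiv
    (fun y hy ↦ sub_nonneg.2 (mul_cos_le_sin hy.1 (hy.2.trans hxπ))) hx₀
  simp only [cos_zero, sin_zero, mul_zero] at this
  linarith

lemma three_mul_sin_le_mul_two_add_cos {x : ℝ} (hx₀ : 0 ≤ x) :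
    3 * sin x ≤ x * (2 + cos x) := by
  rcases le_or_gt x π with hxπ | hxπ
  · have hderiv (y : ℝ) : HasDerivAt (fun y ↦ y * (2 + cos y) - 3 * sin y)
        (2 - 2 * cos y - y * sin y) y := by
      refine (((hasDerivAt_id' y).mul ((hasDerivAt_cos y).const_add 2)).sub
        ((hasDerivAt_sin y).const_mul 3)).congr_deriv ?_
      ring
    have := le_of_hasDerivAt_nonneg hderiv
      (fun y hy ↦ sub_nonneg.2 (mul_sin_le_two_sub_two_mul_cos hy.1 (hy.2.trans hxπ))) hx₀
    simp only [sin_zero, zero_mul, mul_zero, sub_zero] at this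
    linarith
  · nlinarith [sin_le_one x, neg_one_le_cos x, pi_gt_three]

lemma four_sub_four_mul_cos_le {x : ℝ} (hx₀ : 0 ≤ x) :
    4 - 4 * cos x ≤ x ^ 2 + x * sin x := by
  have hderiv (y : ℝ) : HasDerivAt (fun y ↦ y ^ 2 + y * sin y + 4 * cos y)
      (y * (2 + cos y) - 3 * sin y) y := by
    refine (((hasDerivAt_pow 2 y).add ((hasDerivAt_id' y).mul (hasDerivAt_sin y))).add
      ((hasDerivAt_cos y).const_mul 4)).congr_deriv ?_
    ring
  have := le_of_hasDerivAt_nonneg hderiv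
    (fun y hy ↦ sub_nonneg.2 (three_mul_sin_le_mul_two_add_cos hy.1)) hx₀
  simp only [cos_zero, zero_mul, zero_pow two_ne_zero, zero_add] at this
  linarith

lemma two_mul_sin_sq_le {x : ℝ} (hx₀ : 0 ≤ x) :
    2 * sin x ^ 2 ≤ x ^ 2 + x * sin x * cos x := by
  have := four_sub_four_mul_cos_le (mul_nonneg zero_le_two hx₀)
  rw [sin_two_mul, cos_two_mul, cos_sq'] at this
  nlinarith

end Real

lemma hasDerivAt_sq_sub_sin_sq_div_pow_four {x : ℝ} (hx : x ≠ 0) :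
    HasDerivAt (fun x ↦ (x ^ 2 - sin x ^ 2) / x ^ 4)
      (-2 * (x ^ 2 + x * sin x * cos x - 2 * sin x ^ 2) / x ^ 5) x := by
  refine (((hasDerivAt_pow 2 x).sub ((hasDerivAt_sin x).pow 2)).div (hasDerivAt_pow 4 x)
    (pow_ne_zero 4 hx)).congr_deriv ?_
  simp only [Pi.sub_apply, Pi.pow_apply]
  field_simp
  ring

lemma antitoneOn_sq_sub_sin_sq_div_pow_four :
    AntitoneOn (fun x ↦ (x ^ 2 - sin x ^ 2) / x ^ 4) (Ioi 0) := by
  have hderiv {x : ℝ} (hx : x ∈ Ioi 0) := hasDerivAt_sq_sub_sin_sq_div_pow_four hx.ne'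
  refine antitoneOn_of_hasDerivWithinAt_nonpos (convex_Ioi 0)
    (f' := fun x ↦ -2 * (x ^ 2 + x * sin x * cos x - 2 * sin x ^ 2) / x ^ 5)
    (fun x hx ↦ (hderiv hx).continuousAt.continuousWithinAt) ?_ ?_ <;> rw [interior_Ioi]
  · exact fun x hx ↦ (hderiv hx).hasDerivWithinAt
  · intro x hx
    exact div_nonpos_of_nonpos_of_nonneg (by nlinarith [two_mul_sin_sq_le hx.le])
      (pow_pos hx 5).le

theorem stmt4 (θ : ℝ) (hθ : 0 < θ) :
    AntitoneOn
      (fun t : ℝ =>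
        ((Real.sin (t * θ)) ^ 2 - (t * θ) ^ 2) / ((Real.sin θ) ^ 2 - θ ^ 2) / t ^ 4)
      (Ioc 0 1) ∧
    ∀ t ∈ Ioc (0 : ℝ) 1,
      ((Real.sin (t * θ)) ^ 2 - (t * θ) ^ 2) / ((Real.sin θ) ^ 2 - θ ^ 2) ≥ t ^ 4 := by
  set G : ℝ → ℝ := fun x ↦ (x ^ 2 - sin x ^ 2) / x ^ 4
  have hsin : sin θ ^ 2 < θ ^ 2 := sin_sq_lt_sq hθ.ne'
  have hGθ : 0 < G θ := div_pos (sub_pos.2 hsin) (by positivity)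
  have hβ (t : ℝ) (ht : t ≠ 0) :
      (sin (t * θ) ^ 2 - (t * θ) ^ 2) / (sin θ ^ 2 - θ ^ 2) / t ^ 4 = G (t * θ) / G θ := by
    have hgap : θ ^ 2 - sin θ ^ 2 ≠ 0 := (sub_pos.2 hsin).ne'
    rw [← neg_sub (θ ^ 2), ← neg_sub ((t * θ) ^ 2)]
    simp only [G]
    field_simp
  have hanti : AntitoneOn
      (fun t : ℝ ↦ (sin (t * θ) ^ 2 - (t * θ) ^ 2) / (sin θ ^ 2 - θ ^ 2) / t ^ 4)
      (Ioc 0 1) := by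
    intro a ha b hb hab
    simp only [hβ a ha.1.ne', hβ b hb.1.ne']
    exact div_le_div_of_nonneg_right (antitoneOn_sq_sub_sin_sq_div_pow_four
      (mul_pos ha.1 hθ) (mul_pos hb.1 hθ) (mul_le_mul_of_nonneg_right hab hθ.le)) hGθ.le
  refine ⟨hanti, fun t ht ↦ ?_⟩
  have hle := hanti ht ⟨one_pos, le_rfl⟩ ht.2
  simp only [one_mul, one_pow, div_one] at hle
  rw [div_self (sub_neg.2 hsin).ne] at hle
  exact (one_le_div (pow_pos ht.1 4)).1 hle
end

section
/- Let B, V be symmetric n×n real matrices with B² = B and B ≥ 0, let ρ ∈ ℝ, k > 0, and a > 1. Then −(ρ/k)(V·B + B·V) ≥ −(ρ²/k²)·a²·B − (1/a²)·V·B·V in the sense of quadratic forms (i.e., the difference is positive semidefinite). -/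
open Matrix

theorem stmt12 (n : ℕ) (B V : Matrix (Fin n) (Fin n) ℝ)
    (hBsymm : Bᵀ = B) (hVsymm : Vᵀ = V)
    (hB2 : B * B = B) (hBpsd : B.PosSemidef)
    (ρ k a : ℝ) (hk : 0 < k) (ha : 1 < a) :
    (-(ρ / k) • (V * B + B * V) -
      (-(ρ ^ 2 / k ^ 2 * a ^ 2) • B - (1 / a ^ 2) • (V * B * V))).PosSemidef := by
  have ha0 : a ≠ 0 := by positivity
  set C : Matrix (Fin n) (Fin n) ℝ := (ρ / k * a) • B - (1 / a) • (B * V) with hC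
  have hCT : Cᴴ = (ρ / k * a) • B - (1 / a) • (V * B) := by
    simp [hC, conjTranspose_sub, conjTranspose_smul, conjTranspose_mul,
      show ∀ M : Matrix (Fin n) (Fin n) ℝ, Mᴴ = Mᵀ from fun M => rfl,
      transpose_mul, hBsymm, hVsymm]
  have key : (-(ρ / k) • (V * B + B * V) -
      (-(ρ ^ 2 / k ^ 2 * a ^ 2) • B - (1 / a ^ 2) • (V * B * V))) = Cᴴ * C := by
    rw [hCT, hC]
    rw [sub_mul, mul_sub, mul_sub, smul_mul_smul_comm, smul_mul_smul_comm,
      smul_mul_smul_comm, smul_mul_smul_comm]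
    rw [hB2, show B * (B * V) = B * V from by rw [← mul_assoc, hB2],
      show V * B * B = V * B from by rw [mul_assoc, hB2],
      show V * B * (B * V) = V * B * V from by
        rw [mul_assoc, ← mul_assoc B B V, hB2, ← mul_assoc]]
    have e1 : ρ / k * a * (ρ / k * a) = ρ ^ 2 / k ^ 2 * a ^ 2 := by ring
    have e2 : ρ / k * a * (1 / a) = ρ / k := by field_simp
    have e3 : 1 / a * (ρ / k * a) = ρ / k := by field_simp
    have e4 : 1 / a * (1 / a) = 1 / a ^ 2 := by field_simp
    rw [e1, e2, e3, e4]
    match_scalars <;> ring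
  rw [key]
  exact posSemidef_conjTranspose_mul_self C
end
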